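/- arXiv:1306.5294 — 5 statements merged into one kernel-verified Lean document; each statement's English description precedes it below -/
import Mathlib

section
/- For x ≠ 0, the noncentral t density satisfies f_{t_{ν,δ}}(x) = (ν/x) · [ F_{t_{ν+2,δ}}( x·√(1 + 2/ν) ) − F_{t_{ν,δ}}(x) ], where F_{t_{ν,δ}} and F_{t_{ν+2,δ}} are the CDFs of noncentral t distributions with ν and ν+2 degrees of freedom respectively and common noncentrality δ. -/
open MeasureTheory ProbabilityTheory Real Set

/-- Standard normal probability density function φ. -/
noncomputable def stdNormalPDF (z : ℝ) : ℝ :=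
  (Real.sqrt (2 * Real.pi))⁻¹ * Real.exp (- z ^ 2 / 2)

/-- Standard normal cumulative distribution function Φ. -/
noncomputable def stdNormalCDF (x : ℝ) : ℝ := ∫ z in Set.Iic x, stdNormalPDF z

/-- Density of the chi-square distribution with ν degrees of freedom. -/
noncomputable def chiSqPDF (ν q : ℝ) : ℝ :=
  if 0 < q then ((1 : ℝ) / 2) ^ (ν / 2) / Real.Gamma (ν / 2) * q ^ (ν / 2 - 1) * Real.exp (- q / 2)
  else 0

/-- CDF of the chi-square distribution with ν degrees of freedom. -/
noncomputable def chiSqCDF (ν q : ℝ) : ℝ := ∫ t in Set.Iic q, chiSqPDF ν t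

/-- Upper regularized incomplete gamma function Γ_u(a, x). -/
noncomputable def upperRegGamma (a x : ℝ) : ℝ :=
  (∫ t in Set.Ioi x, Real.exp (-t) * t ^ (a - 1)) / Real.Gamma a

/-- Lower regularized incomplete gamma function Γ_l(a, x). -/
noncomputable def lowerRegGamma (a x : ℝ) : ℝ := 1 - upperRegGamma a x

open scoped NNReal
open Filter Topology

/-!
Conditioning on `Q` writes the CDF as a gamma mixture of normal CDFs,
`F_{ν,δ}(y) = ∫ Φ(y √(q/ν) - δ) dγ_{ν/2}(q)` with `γ_a` the Gamma(a, 1/2) law, and the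
density is obtained by differentiating under the integral. For `h(q) = Φ(x √(q/ν) - δ)` one has
`q h'(q) = (x/2) φ(x √(q/ν) - δ) √(q/ν)`, so Stein's identity for the gamma law,
`∫ q h' dγ_a = ∫ (q/2 - a) h dγ_a` (integration by parts; the boundary terms of `q h(q) γ_a(q)`
vanish), together with the size bias `q dγ_a = 2a dγ_{a+1}`, gives
`x f_{ν,δ}(x) = ν (∫ h dγ_{ν/2+1} - ∫ h dγ_{ν/2})`. Since `√(1 + 2/ν) √(q/(ν+2)) = √(q/ν)`, the
first integral is `F_{ν+2,δ}(x √(1 + 2/ν))`.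
-/

lemma hasDerivAt_cdf_gaussianReal (μ : ℝ) {v : ℝ≥0} (hv : v ≠ 0) (x : ℝ) :
    HasDerivAt (cdf (gaussianReal μ v)) (gaussianPDFReal μ v x) x := by
  have hint := integrable_gaussianPDFReal μ v
  have hcdf : ∀ y, cdf (gaussianReal μ v) y
      = cdf (gaussianReal μ v) 0 + ∫ t in (0 : ℝ)..y, gaussianPDFReal μ v t := by
    intro y
    simp only [cdf_eq_real, measureReal_def, gaussianReal_apply_eq_integral μ hv,
      ENNReal.toReal_ofReal (integral_nonneg (gaussianPDFReal_nonneg μ v))]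
    rw [← intervalIntegral.integral_Iic_sub_Iic hint.integrableOn hint.integrableOn]
    ring
  rw [funext hcdf]
  refine (intervalIntegral.integral_hasDerivAt_right hint.intervalIntegrable
    hint.aestronglyMeasurable.stronglyMeasurableAtFilter ?_).const_add _
  unfold gaussianPDFReal
  fun_prop

lemma continuous_cdf_gaussianReal (μ : ℝ) {v : ℝ≥0} (hv : v ≠ 0) :
    Continuous (cdf (gaussianReal μ v)) :=
  continuous_iff_continuousAt.2 fun x => (hasDerivAt_cdf_gaussianReal μ hv x).continuousAt

lemma gaussianPDFReal_le (μ : ℝ) (v : ℝ≥0) (x : ℝ) :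
    gaussianPDFReal μ v x ≤ (√(2 * π * v))⁻¹ := by
  refine mul_le_of_le_one_right (by positivity) (Real.exp_le_one_iff.2 ?_)
  exact div_nonpos_of_nonpos_of_nonneg (neg_nonpos.2 (sq_nonneg _)) (by positivity)

section Gamma

variable {a r : ℝ}

lemma measurable_gammaPDF (a r : ℝ) : Measurable (gammaPDF a r) :=
  (measurable_gammaPDFReal a r).ennreal_ofReal

lemma ae_pos_gammaMeasure : ∀ᵐ q ∂gammaMeasure a r, 0 < q := by
  have hIic : {q : ℝ | ¬ 0 < q} = Iic 0 := by ext; simp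
  rw [ae_iff, hIic, gammaMeasure, withDensity_apply _ measurableSet_Iic,
    ← setLIntegral_congr Iio_ae_eq_Iic]
  exact lintegral_gammaPDF_of_nonpos le_rfl

lemma integrable_gammaMeasure_iff (ha : 0 < a) (hr : 0 < r) {f : ℝ → ℝ} :
    Integrable f (gammaMeasure a r) ↔ Integrable (fun q => gammaPDFReal a r q * f q) := by
  rw [gammaMeasure, integrable_withDensity_iff_integrable_smul'
    (measurable_gammaPDF a r) (ae_of_all _ fun _ => ENNReal.ofReal_lt_top)]
  simp only [gammaPDF, ENNReal.toReal_ofReal (gammaPDFReal_nonneg ha hr _), smul_eq_mul]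

lemma integral_gammaMeasure (ha : 0 < a) (hr : 0 < r) (f : ℝ → ℝ) :
    ∫ q, f q ∂gammaMeasure a r = ∫ q in Ioi 0, gammaPDFReal a r q * f q := by
  rw [gammaMeasure, integral_withDensity_eq_integral_toReal_smul
    (measurable_gammaPDF a r) (ae_of_all _ fun _ => ENNReal.ofReal_lt_top),
    ← integral_Ici_eq_integral_Ioi, setIntegral_eq_integral_of_forall_compl_eq_zero]
  · simp only [gammaPDF, ENNReal.toReal_ofReal (gammaPDFReal_nonneg ha hr _), smul_eq_mul]
  · intro q hq
    simp [gammaPDFReal, show ¬ 0 ≤ q from hq]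

lemma gammaPDFReal_add_one (ha : a ≠ 0) (hr : r ≠ 0) (q : ℝ) :
    gammaPDFReal (a + 1) r q = r / a * q * gammaPDFReal a r q := by
  unfold gammaPDFReal
  split_ifs with hq
  · rcases hq.eq_or_lt with rfl | hq
    · simp [Real.zero_rpow ha]
    rw [Real.Gamma_add_one ha, add_sub_cancel_right, Real.rpow_add_one hr,
      Real.rpow_sub_one hq.ne']
    field_simp
  · simp

lemma integral_gammaMeasure_add_one (ha : 0 < a) (hr : 0 < r) (f : ℝ → ℝ) :
    ∫ q, f q ∂gammaMeasure (a + 1) r = r / a * ∫ q, q * f q ∂gammaMeasure a r := by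
  simp only [integral_gammaMeasure ha hr, integral_gammaMeasure (by linarith : 0 < a + 1) hr,
    gammaPDFReal_add_one ha.ne' hr.ne', ← integral_const_mul]
  congr 1 with q
  ring

lemma integrable_id_gammaMeasure (ha : 0 < a) (hr : 0 < r) :
    Integrable (fun q => q) (gammaMeasure a r) := by
  have := isProbabilityMeasure_gammaMeasure (by linarith : 0 < a + 1) hr
  have h := (integrable_gammaMeasure_iff (by linarith : 0 < a + 1) hr).1
    (integrable_const (1 : ℝ))
  rw [integrable_gammaMeasure_iff ha hr]
  refine (h.const_mul (a / r)).congr (ae_of_all _ fun q => ?_)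
  simp only [gammaPDFReal_add_one ha.ne' hr.ne']
  field_simp

lemma integrable_sqrt_div_gammaMeasure (ha : 0 < a) (hr : 0 < r) {c : ℝ} (hc : 0 ≤ c) :
    Integrable (fun q => √(q / c)) (gammaMeasure a r) := by
  have := isProbabilityMeasure_gammaMeasure ha hr
  have hsqrt : Integrable (fun q => √q) (gammaMeasure a r) := by
    refine ((integrable_const 1).add (integrable_id_gammaMeasure ha hr)).mono' (by fun_prop) ?_
    filter_upwards [ae_pos_gammaMeasure] with q hq
    rw [Real.norm_of_nonneg (Real.sqrt_nonneg _), Pi.add_apply]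
    exact Real.sqrt_le_iff.2 ⟨by positivity, by nlinarith⟩
  simpa only [Real.sqrt_div' _ hc] using hsqrt.div_const √c

lemma mul_gammaPDFReal_of_pos {q : ℝ} (hq : 0 < q) :
    q * gammaPDFReal a r q = r ^ a / Real.Gamma a * (q ^ a * Real.exp (-(r * q))) := by
  rw [gammaPDFReal, if_pos hq.le, Real.rpow_sub_one hq.ne']
  field_simp

lemma hasDerivAt_mul_gammaPDFReal {q : ℝ} (hq : 0 < q) :
    HasDerivAt (fun q => q * gammaPDFReal a r q) ((a - r * q) * gammaPDFReal a r q) q := by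
  have hloc : (fun q => r ^ a / Real.Gamma a * (q ^ a * Real.exp (-(r * q))))
      =ᶠ[𝓝 q] fun q => q * gammaPDFReal a r q := by
    filter_upwards [lt_mem_nhds hq] with p hp
    exact (mul_gammaPDFReal_of_pos hp).symm
  have hexp : HasDerivAt (fun q => Real.exp (-(r * q))) (Real.exp (-(r * q)) * -r) q := by
    simpa using ((hasDerivAt_id q).const_mul r).neg.exp
  refine (((Real.hasDerivAt_rpow_const (Or.inl hq.ne')).mul hexp).const_mul _
    |>.congr_of_eventuallyEq hloc.symm).congr_deriv ?_
  rw [gammaPDFReal, if_pos hq.le, Real.rpow_sub_one hq.ne']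
  field_simp
  ring

lemma continuousWithinAt_mul_gammaPDFReal (ha : 0 < a) :
    ContinuousWithinAt (fun q => q * gammaPDFReal a r q) (Ici 0) 0 := by
  rw [← continuousWithinAt_Ioi_iff_Ici]
  refine ContinuousWithinAt.congr
    (f := fun q => r ^ a / Real.Gamma a * (q ^ a * Real.exp (-(r * q)))) ?_
    (fun q hq => mul_gammaPDFReal_of_pos hq) (by simp [Real.zero_rpow ha.ne'])
  exact (((Real.continuousAt_rpow_const 0 a (Or.inr ha.le)).mul
    (by fun_prop)).const_mul _).continuousWithinAt

lemma tendsto_mul_gammaPDFReal_atTop (hr : 0 < r) :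
    Tendsto (fun q => q * gammaPDFReal a r q) atTop (𝓝 0) := by
  have hlim := (tendsto_rpow_mul_exp_neg_mul_atTop_nhds_zero a r hr).const_mul
    (r ^ a / Real.Gamma a)
  rw [mul_zero] at hlim
  refine hlim.congr' ?_
  filter_upwards [eventually_gt_atTop 0] with q hq
  rw [mul_gammaPDFReal_of_pos hq, neg_mul]

lemma integral_mul_deriv_gammaMeasure (ha : 0 < a) (hr : 0 < r) {h h' : ℝ → ℝ} {M : ℝ}
    (hh : Continuous h) (hM : ∀ q, |h q| ≤ M) (hderiv : ∀ q, 0 < q → HasDerivAt h (h' q) q)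
    (hint : Integrable (fun q => q * h' q) (gammaMeasure a r)) :
    ∫ q, q * h' q ∂gammaMeasure a r = ∫ q, (r * q - a) * h q ∂gammaMeasure a r := by
  have := isProbabilityMeasure_gammaMeasure ha hr
  have hint' : Integrable (fun q => (r * q - a) * h q) (gammaMeasure a r) :=
    (((integrable_id_gammaMeasure ha hr).const_mul r).sub (integrable_const a)).mul_bdd
      hh.aestronglyMeasurable (ae_of_all _ hM)
  set W : ℝ → ℝ := fun q => h q * (q * gammaPDFReal a r q)
  have hW : ∀ q ∈ Ioi (0 : ℝ), HasDerivAt W (gammaPDFReal a r q * (q * h' q)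
      - gammaPDFReal a r q * ((r * q - a) * h q)) q := fun q hq =>
    ((hderiv q hq).mul (hasDerivAt_mul_gammaPDFReal hq)).congr_deriv (by ring)
  have hW0 : ContinuousWithinAt W (Ici 0) 0 :=
    hh.continuousWithinAt.mul (continuousWithinAt_mul_gammaPDFReal ha)
  have hWtop : Tendsto W atTop (𝓝 0) :=
    isBoundedUnder_le_mul_tendsto_zero (isBoundedUnder_of ⟨M, hM⟩)
      (tendsto_mul_gammaPDFReal_atTop hr)
  have hFTC := integral_Ioi_of_hasDerivAt_of_tendsto hW0 hW
    ((((integrable_gammaMeasure_iff ha hr).1 hint).sub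
      ((integrable_gammaMeasure_iff ha hr).1 hint')).integrableOn) hWtop
  rw [integral_sub ((integrable_gammaMeasure_iff ha hr).1 hint).integrableOn
    ((integrable_gammaMeasure_iff ha hr).1 hint').integrableOn] at hFTC
  simp only [integral_gammaMeasure ha hr]
  simpa [W, sub_eq_zero] using hFTC

lemma integral_sub_mul_gammaMeasure (ha : 0 < a) (hr : 0 < r) {h : ℝ → ℝ} {M : ℝ}
    (hh : AEStronglyMeasurable h (gammaMeasure a r)) (hM : ∀ q, |h q| ≤ M) :
    ∫ q, (r * q - a) * h q ∂gammaMeasure a r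
      = a * (∫ q, h q ∂gammaMeasure (a + 1) r - ∫ q, h q ∂gammaMeasure a r) := by
  have := isProbabilityMeasure_gammaMeasure ha hr
  have hqh := (integrable_id_gammaMeasure ha hr).mul_bdd hh (ae_of_all _ hM)
  simp_rw [sub_mul, mul_assoc]
  rw [integral_sub (hqh.const_mul r) ((Integrable.of_bound hh M (ae_of_all _ hM)).const_mul a),
    integral_const_mul, integral_const_mul, integral_gammaMeasure_add_one ha hr]
  field_simp

end Gamma

local notation "Φ" => cdf (gaussianReal 0 1)
local notation "φ" => gaussianPDFReal 0 1

lemma measure_le_comp_of_indepFun {Ω : Type*} [MeasurableSpace Ω] {P : Measure Ω}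
    [IsFiniteMeasure P] {X Y : Ω → ℝ} (hX : Measurable X) (hY : Measurable Y)
    (hXY : IndepFun X Y P) {g : ℝ → ℝ} (hg : Measurable g) :
    P {ω | X ω ≤ g (Y ω)} = ∫⁻ y, P.map X (Iic (g y)) ∂P.map Y := by
  have hS : MeasurableSet {p : ℝ × ℝ | p.1 ≤ g p.2} :=
    measurableSet_le measurable_fst (hg.comp measurable_snd)
  rw [show {ω | X ω ≤ g (Y ω)} = (fun ω => (X ω, Y ω)) ⁻¹' {p | p.1 ≤ g p.2} from rfl,
    ← Measure.map_apply (hX.prodMk hY) hS,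
    (indepFun_iff_map_prod_eq_prod_map_map hX.aemeasurable hY.aemeasurable).1 hXY,
    Measure.prod_apply_symm hS]
  rfl

lemma noncentralT_cdf_eq_integral {Ω : Type*} [MeasurableSpace Ω] {P : Measure Ω}
    [IsProbabilityMeasure P] {Z Q : Ω → ℝ} (hZ : Measurable Z) (hQ : Measurable Q)
    (hZlaw : P.map Z = gaussianReal 0 1) (hQpos : ∀ᵐ ω ∂P, 0 < Q ω)
    (hindep : IndepFun Z Q P) {θ : ℝ} (hθ : 0 < θ) (δ y : ℝ) :
    (P {ω | (Z ω + δ) / √(Q ω / θ) ≤ y}).toReal = ∫ q, Φ (y * √(q / θ) - δ) ∂P.map Q := by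
  have hevent : {ω | (Z ω + δ) / √(Q ω / θ) ≤ y}
      =ᵐ[P] {ω | Z ω ≤ y * √(Q ω / θ) - δ} := by
    filter_upwards [hQpos] with ω hω
    change ((Z ω + δ) / √(Q ω / θ) ≤ y) = (Z ω ≤ y * √(Q ω / θ) - δ)
    rw [div_le_iff₀ (Real.sqrt_pos.2 (div_pos hω hθ)), le_sub_iff_add_le]
  rw [measure_congr hevent,
    measure_le_comp_of_indepFun hZ hQ hindep (g := fun q => y * √(q / θ) - δ) (by fun_prop),
    hZlaw]
  simp_rw [← ofReal_cdf]
  refine (integral_eq_lintegral_of_nonneg_ae (ae_of_all _ fun _ => cdf_nonneg _ _) ?_).symm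
  exact ((monotone_cdf _).measurable.comp (by fun_prop)).aestronglyMeasurable

lemma hasDerivAt_integral_cdf_gaussianReal {α : Type*} [MeasurableSpace α] {μ : Measure α}
    [IsFiniteMeasure μ] {s : α → ℝ} (hs : Integrable s μ) (δ x : ℝ) :
    HasDerivAt (fun y => ∫ t, Φ (y * s t - δ) ∂μ) (∫ t, φ (x * s t - δ) * s t ∂μ) x := by
  have hderiv : ∀ y t, HasDerivAt (fun y => Φ (y * s t - δ)) (φ (y * s t - δ) * s t) y :=
    fun y t =>
    (hasDerivAt_cdf_gaussianReal 0 one_ne_zero _).comp y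
      (((hasDerivAt_id y).mul_const (s t)).sub_const δ |>.congr_deriv (one_mul _))
  have hφ : Continuous φ := by
    unfold gaussianPDFReal
    fun_prop
  have hmeas : ∀ y, AEStronglyMeasurable (fun t => Φ (y * s t - δ)) μ :=
    fun y => (continuous_cdf_gaussianReal 0 one_ne_zero).comp_aestronglyMeasurable
      ((hs.aestronglyMeasurable.const_mul y).sub aestronglyMeasurable_const)
  refine (hasDerivAt_integral_of_dominated_loc_of_deriv_le
    (bound := fun t => (√(2 * π))⁻¹ * ‖s t‖) univ_mem (Eventually.of_forall hmeas)
    ?_ ?_ ?_ (hs.norm.const_mul _)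
    (ae_of_all _ fun t y _ => hderiv y t)).2
  · exact Integrable.of_bound (hmeas x) 1 (ae_of_all _ fun t => by
      rw [Real.norm_eq_abs, abs_of_nonneg (cdf_nonneg _ _)]
      exact cdf_le_one _ _)
  · exact (hφ.comp_aestronglyMeasurable
      ((hs.aestronglyMeasurable.const_mul x).sub aestronglyMeasurable_const)).mul
      hs.aestronglyMeasurable
  · refine ae_of_all _ fun t y _ => ?_
    rw [norm_mul, Real.norm_of_nonneg (gaussianPDFReal_nonneg _ _ _)]
    gcongr
    simpa using gaussianPDFReal_le 0 1 (y * s t - δ)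

lemma integral_gaussianPDFReal_mul_sqrt_gammaMeasure {ν : ℝ} (hν : 0 < ν) (δ : ℝ) {x : ℝ}
    (hx : x ≠ 0) :
    ∫ q, φ (x * √(q / ν) - δ) * √(q / ν) ∂gammaMeasure (ν / 2) (1 / 2)
      = ν / x *
        (∫ q, Φ (x * √(q / ν) - δ) ∂gammaMeasure (ν / 2 + 1) (1 / 2)
          - ∫ q, Φ (x * √(q / ν) - δ) ∂gammaMeasure (ν / 2) (1 / 2)) := by
  have ha : 0 < ν / 2 := by positivity
  have hr : (0 : ℝ) < 1 / 2 := one_half_pos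
  have := isProbabilityMeasure_gammaMeasure ha hr
  set γ := gammaMeasure (ν / 2) (1 / 2)
  set s : ℝ → ℝ := fun q => x * √(q / ν) - δ
  set h : ℝ → ℝ := fun q => Φ (s q)
  set h' : ℝ → ℝ := fun q => φ (s q) * (x * (1 / (2 * √(q / ν)) * (1 / ν)))
  have hderiv : ∀ q, 0 < q → HasDerivAt h (h' q) q := fun q hq =>
    (hasDerivAt_cdf_gaussianReal 0 one_ne_zero _).comp q
      ((((Real.hasDerivAt_sqrt (div_pos hq hν).ne').comp q
        ((hasDerivAt_id q).div_const ν)).const_mul x).sub_const δ)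
  have hbdd : ∀ q, |h q| ≤ 1 := fun q => by
    rw [abs_of_nonneg (cdf_nonneg _ _)]
    exact cdf_le_one _ _
  have hh : Continuous h := (continuous_cdf_gaussianReal 0 one_ne_zero).comp (by fun_prop)
  have hqh' : (fun q => q * h' q) =ᵐ[γ] fun q => x / 2 * (φ (s q) * √(q / ν)) := by
    filter_upwards [ae_pos_gammaMeasure] with q hq
    have hsq := Real.sq_sqrt (div_pos hq hν).le
    have := Real.sqrt_pos.2 (div_pos hq hν)
    simp only [h']
    field_simp
    rw [hsq]
    field_simp
  have hint : Integrable (fun q => q * h' q) γ := by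
    refine (Integrable.const_mul ?_ (x / 2)).congr hqh'.symm
    refine (integrable_sqrt_div_gammaMeasure ha hr hν.le).bdd_mul (c := (√(2 * π))⁻¹)
      ((measurable_gaussianPDFReal 0 1).comp (by fun_prop)).aestronglyMeasurable
      (ae_of_all _ fun q => ?_)
    rw [Real.norm_of_nonneg (gaussianPDFReal_nonneg _ _ _)]
    simpa using gaussianPDFReal_le 0 1 (s q)
  have hstein := (integral_mul_deriv_gammaMeasure ha hr hh hbdd hderiv hint).trans
    (integral_sub_mul_gammaMeasure ha hr hh.aestronglyMeasurable hbdd)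
  rw [integral_congr_ae hqh', integral_const_mul] at hstein
  rw [div_mul_eq_mul_div, eq_div_iff hx]
  linear_combination 2 * hstein

/-- for x ≠ 0,
f_{t_{ν,δ}}(x) = (ν/x)·[F_{t_{ν+2,δ}}(x√(1+2/ν)) − F_{t_{ν,δ}}(x)]. -/
theorem noncentralT_pdf_recurrence
    {Ω : Type*} [MeasurableSpace Ω] (P : Measure Ω) [IsProbabilityMeasure P]
    (Z Q : Ω → ℝ) (hZ : Measurable Z) (hQ : Measurable Q)
    (ν δ : ℝ) (hν : 0 < ν)
    (hZlaw : Measure.map Z P = ProbabilityTheory.gaussianReal 0 1)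
    (hQlaw : Measure.map Q P = ProbabilityTheory.gammaMeasure (ν / 2) (1 / 2))
    (hindep : ProbabilityTheory.IndepFun Z Q P)
    (Q2 : Ω → ℝ) (hQ2 : Measurable Q2)
    (hQ2law : Measure.map Q2 P = ProbabilityTheory.gammaMeasure ((ν + 2) / 2) (1 / 2))
    (hindep2 : ProbabilityTheory.IndepFun Z Q2 P)
    (x : ℝ) (hx : x ≠ 0) :
    HasDerivAt (fun y : ℝ => (P {ω | (Z ω + δ) / Real.sqrt (Q ω / ν) ≤ y}).toReal)
      (ν / x *
        ((P {ω | (Z ω + δ) / Real.sqrt (Q2 ω / (ν + 2)) ≤ x * Real.sqrt (1 + 2 / ν)}).toReal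
          - (P {ω | (Z ω + δ) / Real.sqrt (Q ω / ν) ≤ x}).toReal)) x := by
  have hQpos : ∀ᵐ ω ∂P, 0 < Q ω :=
    ae_of_ae_map hQ.aemeasurable (hQlaw ▸ ae_pos_gammaMeasure)
  have hQ2pos : ∀ᵐ ω ∂P, 0 < Q2 ω :=
    ae_of_ae_map hQ2.aemeasurable (hQ2law ▸ ae_pos_gammaMeasure)
  have hF : ∀ y, (P {ω | (Z ω + δ) / √(Q ω / ν) ≤ y}).toReal
      = ∫ q, Φ (y * √(q / ν) - δ) ∂gammaMeasure (ν / 2) (1 / 2) :=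
    fun y => by rw [noncentralT_cdf_eq_integral hZ hQ hZlaw hQpos hindep hν, hQlaw]
  have hF2 : (P {ω | (Z ω + δ) / √(Q2 ω / (ν + 2)) ≤ x * √(1 + 2 / ν)}).toReal
      = ∫ q, Φ (x * √(q / ν) - δ) ∂gammaMeasure (ν / 2 + 1) (1 / 2) := by
    rw [noncentralT_cdf_eq_integral hZ hQ2 hZlaw hQ2pos hindep2 (by linarith), hQ2law,
      add_div, div_self two_ne_zero]
    congr with q
    rw [mul_assoc, ← Real.sqrt_mul (by positivity)]
    field_simp
  rw [funext hF, hF x, hF2, ← integral_gaussianPDFReal_mul_sqrt_gammaMeasure hν δ hx]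
  have ha : 0 < ν / 2 := by positivity
  have := isProbabilityMeasure_gammaMeasure ha one_half_pos
  exact hasDerivAt_integral_cdf_gaussianReal
    (integrable_sqrt_div_gammaMeasure ha one_half_pos hν.le) δ x
end

section
/- For ν > 2 and q > ν − 2, the chi-square upper tail satisfies P(χ²_ν > q) ≤ (1/√π) · (q/(q − ν + 2)) · exp( −(1/2)( q − ν − (ν−2) log(q/ν) + log ν ) ). -/
open MeasureTheory ProbabilityTheory Real Set

/-! The gamma density `f` with shape `a ≥ 1` is log-concave, so on `(q, ∞)` it lies below the
exponential `f q * exp (-s (x - q))` with `s = r - (a - 1) / q`, the slope of `-log f` at `q`;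
integrating gives `P(X > q) ≤ f q / s`. For `χ²_ν` the value `f q` is then controlled by the lower
Stirling bound `log Γ(x) ≥ (x - 1/2) log x - x + log (2π) / 2`, valid for every `x > 0`: the error
term does not increase under `x ↦ x + 1` (because `log (1 + 1/x) ≥ 2 / (2x + 1)`), and at `x + n + 1`
it is at least `-O(1/n)` by log-convexity of `Γ` and Stirling's bound for `n!`. -/

open Filter
open scoped Nat

noncomputable def stirlingError (x : ℝ) : ℝ :=
  log (Gamma x) - ((x - 1 / 2) * log x - x + log (2 * π) / 2)

lemma two_div_two_mul_add_one_le_log_one_add_inv {x : ℝ} (hx : 0 < x) :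
    2 / (2 * x + 1) ≤ log (1 + x⁻¹) := by
  simpa [div_eq_mul_inv] using le_hasSum (hasSum_log_one_add_inv hx) 0 fun k _ ↦ by positivity

lemma stirlingError_add_one_le {x : ℝ} (hx : 0 < x) : stirlingError (x + 1) ≤ stirlingError x := by
  have hlog : log (x + 1) = log x + log (1 + x⁻¹) := by
    rw [← log_mul hx.ne' (by positivity)]
    congr 1
    field_simp
  have hslope : 1 ≤ (x + 1 / 2) * log (1 + x⁻¹) := by
    calc (1 : ℝ) = (x + 1 / 2) * (2 / (2 * x + 1)) := by field_simp
      _ ≤ _ := by gcongr; exact two_div_two_mul_add_one_le_log_one_add_inv hx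
  simp only [stirlingError, Gamma_add_one hx.ne', log_mul hx.ne' (Gamma_pos_of_pos hx).ne', hlog]
  linarith

lemma stirlingError_add_nat_le {x : ℝ} (hx : 0 < x) (n : ℕ) :
    stirlingError (x + n) ≤ stirlingError x := by
  induction n with
  | zero => simp
  | succ n ih =>
    push_cast
    rw [← add_assoc]
    exact (stirlingError_add_one_le (by positivity)).trans ih

lemma neg_div_le_stirlingError_add_nat {x : ℝ} (hx : 0 < x) {n : ℕ} (hn : n ≠ 0) :
    -((x + 1) * (x + 1 / 2) / n) ≤ stirlingError (x + (n + 1)) := by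
  have hn0 : (0 : ℝ) < n := by positivity
  have hconv : log n ! + x * log n ≤ log (Gamma (x + (n + 1))) := by
    have := BohrMollerup.f_add_nat_ge convexOn_log_Gamma
      (fun hy ↦ by simp [add_comm, Gamma_add_one hy.ne', log_mul hy.ne' (Gamma_pos_of_pos hy).ne'])
      (show 2 ≤ n + 1 by omega) hx
    simpa [Gamma_nat_eq_factorial, add_comm x] using this
  have hfact := Stirling.le_log_factorial_stirling hn
  have hlog : log (x + (n + 1)) - log n ≤ (x + 1) / n := by
    rw [← log_div (by positivity) hn0.ne']
    calc _ ≤ (x + (n + 1)) / n - 1 := log_le_sub_one_of_pos (by positivity)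
      _ = _ := by field_simp; ring
  have hprod : (x + n + 1 / 2) * ((x + 1) / n) = (x + 1) + (x + 1) * (x + 1 / 2) / n := by
    field_simp; ring
  have hscaled := mul_le_mul_of_nonneg_left hlog (by positivity : (0 : ℝ) ≤ x + n + 1 / 2)
  simp only [stirlingError]
  linarith

lemma stirlingError_nonneg {x : ℝ} (hx : 0 < x) : 0 ≤ stirlingError x := by
  have hlim : Tendsto (fun n : ℕ ↦ -((x + 1) * (x + 1 / 2) / n)) atTop (nhds 0) := by
    simpa using (tendsto_const_div_atTop_nhds_zero_nat ((x + 1) * (x + 1 / 2))).neg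
  refine le_of_tendsto hlim ((eventually_ne_atTop 0).mono fun n hn ↦ ?_)
  calc _ ≤ stirlingError (x + (n + 1)) := neg_div_le_stirlingError_add_nat hx hn
    _ ≤ stirlingError x := mod_cast stirlingError_add_nat_le hx (n + 1)

lemma stirling_le_log_Gamma {x : ℝ} (hx : 0 < x) :
    (x - 1 / 2) * log x - x + log (2 * π) / 2 ≤ log (Gamma x) := by
  simpa [stirlingError, sub_nonneg] using stirlingError_nonneg hx

lemma rpow_le_rpow_mul_exp {x q c : ℝ} (hx : 0 ≤ x) (hq : 0 < q) (hc : 0 ≤ c) :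
    x ^ c ≤ q ^ c * exp (c * (x / q - 1)) := by
  have hxq : x / q ≤ exp (x / q - 1) := by linarith [add_one_le_exp (x / q - 1)]
  calc x ^ c = q ^ c * (x / q) ^ c := by
        rw [← mul_rpow hq.le (by positivity), mul_div_cancel₀ x hq.ne']
    _ ≤ q ^ c * exp (x / q - 1) ^ c := by gcongr
    _ = q ^ c * exp (c * (x / q - 1)) := by rw [← exp_mul, mul_comm (x / q - 1)]

lemma gammaPDFReal_le_mul_exp {a r q x : ℝ} (ha : 1 ≤ a) (hr : 0 ≤ r) (hq : 0 < q)
    (hx : 0 ≤ x) :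
    gammaPDFReal a r x ≤ gammaPDFReal a r q * exp (-((r - (a - 1) / q) * (x - q))) := by
  have hexp : exp ((a - 1) * (x / q - 1)) * exp (-(r * x))
      = exp (-(r * q)) * exp (-((r - (a - 1) / q) * (x - q))) := by
    rw [← exp_add, ← exp_add]
    congr 1
    field_simp
    ring
  simp only [gammaPDFReal, if_pos hx, if_pos hq.le]
  calc r ^ a / Gamma a * x ^ (a - 1) * exp (-(r * x))
      ≤ r ^ a / Gamma a * (q ^ (a - 1) * exp ((a - 1) * (x / q - 1))) * exp (-(r * x)) := by
        gcongr
        exact rpow_le_rpow_mul_exp hx hq (by linarith)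
    _ = _ := by linear_combination r ^ a / Gamma a * q ^ (a - 1) * hexp

lemma integrableOn_exp_neg_mul_sub_Ioi {s : ℝ} (hs : 0 < s) (c : ℝ) :
    IntegrableOn (fun x ↦ exp (-(s * (x - c)))) (Ioi c) := by
  have h := (integrableOn_exp_mul_Ioi (neg_neg_of_pos hs) c).const_mul (exp (s * c))
  refine IntegrableOn.congr_fun h (fun x _ ↦ ?_) measurableSet_Ioi
  rw [← exp_add]
  ring_nf

lemma integral_exp_neg_mul_sub_Ioi {s : ℝ} (hs : 0 < s) (c : ℝ) :
    ∫ x in Ioi c, exp (-(s * (x - c))) = s⁻¹ := by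
  have h : (fun x ↦ exp (-(s * (x - c)))) = fun x ↦ exp (s * c) * exp (-s * x) := by
    ext x
    rw [← exp_add]
    ring_nf
  rw [h, integral_const_mul, integral_exp_mul_Ioi (neg_neg_of_pos hs), neg_div_neg_eq,
    ← mul_div_assoc, ← exp_add]
  simp

lemma gammaMeasure_Ioi_toReal_le {a r q : ℝ} (ha : 1 ≤ a) (hq : 0 < q) (hrq : a - 1 < r * q) :
    (gammaMeasure a r (Ioi q)).toReal ≤ gammaPDFReal a r q * (q / (r * q - (a - 1))) := by
  have hr : 0 < r := pos_of_mul_pos_left (by linarith) hq.le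
  have hs : 0 < r - (a - 1) / q := by rw [sub_pos, div_lt_iff₀ hq]; exact hrq
  have hs_inv : (r - (a - 1) / q)⁻¹ = q / (r * q - (a - 1)) := by field_simp
  have hf : 0 ≤ gammaPDFReal a r q := gammaPDFReal_nonneg (by linarith) hr q
  refine ENNReal.toReal_le_of_le_ofReal (mul_nonneg hf (by rw [← hs_inv]; positivity)) ?_
  rw [gammaMeasure, withDensity_apply _ measurableSet_Ioi, ← hs_inv,
    ← integral_exp_neg_mul_sub_Ioi hs q, ← integral_const_mul,
    ofReal_integral_eq_lintegral_ofReal ((integrableOn_exp_neg_mul_sub_Ioi hs q).const_mul _)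
      (ae_of_all _ fun x ↦ by positivity)]
  exact setLIntegral_mono' measurableSet_Ioi fun x hx ↦
    ENNReal.ofReal_le_ofReal (gammaPDFReal_le_mul_exp ha hr.le hq (hq.trans hx).le)

lemma two_mul_gammaPDFReal_half_le {ν q : ℝ} (hν : 0 < ν) (hq : 0 < q) :
    2 * gammaPDFReal (ν / 2) (1 / 2) q
      ≤ 1 / √π * exp (-(1 / 2) * (q - ν - (ν - 2) * log (q / ν) + log ν)) := by
  have hΓ := Gamma_pos_of_pos (half_pos hν)
  have hstirling := stirling_le_log_Gamma (half_pos hν)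
  have hpdf : 2 * gammaPDFReal (ν / 2) (1 / 2) q
      = exp (log 2 + log (1 / 2) * (ν / 2) - log (Gamma (ν / 2)) + log q * (ν / 2 - 1)
          - 1 / 2 * q) := by
    simp only [gammaPDFReal, if_pos hq.le, rpow_def_of_pos (one_half_pos : (0 : ℝ) < 1 / 2),
      rpow_def_of_pos hq, exp_add, exp_sub, exp_neg, exp_log two_pos, exp_log hΓ]
    ring
  have hpi : 1 / √π = exp (-(log π / 2)) := by
    rw [sqrt_eq_rpow, rpow_def_of_pos pi_pos, one_div, ← exp_neg, mul_one_div]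
  rw [hpdf, hpi, ← exp_add, exp_le_exp]
  rw [log_div hν.ne' two_ne_zero, log_mul two_ne_zero pi_ne_zero] at hstirling
  rw [log_div hq.ne' hν.ne', one_div, log_inv]
  linarith

/-- Inglot–Ledwina upper bound for the chi-square upper tail:
P(χ²_ν > q) ≤ (1/√π)·(q/(q−ν+2))·exp(−(1/2)(q − ν − (ν−2)log(q/ν) + log ν)). -/
theorem chiSq_tail_upper_bound (ν q : ℝ) (hν : 2 < ν) (hq : ν - 2 < q) :
    (ProbabilityTheory.gammaMeasure (ν / 2) (1 / 2) (Set.Ioi q)).toReal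
      ≤ (1 / Real.sqrt Real.pi) * (q / (q - ν + 2))
        * Real.exp (-(1 / 2) * (q - ν - (ν - 2) * Real.log (q / ν) + Real.log ν)) := by
  have hq0 : 0 < q := by linarith
  have hratio : q / (1 / 2 * q - (ν / 2 - 1)) = 2 * (q / (q - ν + 2)) := by
    field_simp
    ring
  calc _ ≤ gammaPDFReal (ν / 2) (1 / 2) q * (q / (1 / 2 * q - (ν / 2 - 1))) :=
        gammaMeasure_Ioi_toReal_le (by linarith) hq0 (by linarith)
    _ = q / (q - ν + 2) * (2 * gammaPDFReal (ν / 2) (1 / 2) q) := by rw [hratio]; ring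
    _ ≤ q / (q - ν + 2) * (1 / √π * exp (-(1 / 2) * (q - ν - (ν - 2) * log (q / ν) + log ν))) :=
        mul_le_mul_of_nonneg_left (two_mul_gammaPDFReal_half_le (by linarith) hq0)
          (div_nonneg hq0.le (by linarith))
    _ = _ := by ring
end

section
/- The function h(z) = −log 2 − (1/2)( q(z) − ν − (ν−2) log(q(z)/ν) + log ν + log(2π) + z² ), with q(z) = ν(z+δ)²/x², attains its maximum on (−δ, ∞) at z_mod = [ −δ(x²+2ν) + x√( 4ν(ν−2) + x²(δ²+4(ν−2)) ) ] / (2(x²+ν)), for x > 0, ν > 2, δ ∈ ℝ, provided the argument of the square root is nonnegative. -/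
open MeasureTheory ProbabilityTheory Real Set

set_option maxHeartbeats 1000000 in
lemma hasDerivAt_h (x ν δ : ℝ) (hx : 0 < x) (hν : 2 < ν) (z : ℝ) (hz : -δ < z) :
    HasDerivAt (fun z : ℝ => -Real.log 2 - (1 / 2) *
        (ν * (z + δ) ^ 2 / x ^ 2 - ν - (ν - 2) * Real.log ((ν * (z + δ) ^ 2 / x ^ 2) / ν)
          + Real.log ν + Real.log (2 * Real.pi) + z ^ 2))
      (-(ν * (z + δ) / x ^ 2 + z - (ν - 2) / (z + δ))) z := by
  have hzd : 0 < z + δ := by linarith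
  have hν0 : (0:ℝ) < ν := by linarith
  have hx2 : (0:ℝ) < x ^ 2 := by positivity
  have hwpos : 0 < (ν * (z + δ) ^ 2 / x ^ 2) / ν := by positivity
  have hbase : HasDerivAt (fun z : ℝ => z + δ) 1 z := (hasDerivAt_id z).add_const δ
  have hsq : HasDerivAt (fun z : ℝ => (z + δ) ^ 2) (2 * (z + δ)) z := by
    simpa using hbase.fun_pow 2
  have hq : HasDerivAt (fun z : ℝ => ν * (z + δ) ^ 2 / x ^ 2) (ν * (2 * (z + δ)) / x ^ 2) z :=
    (hsq.const_mul ν).div_const _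
  have hw : HasDerivAt (fun z : ℝ => ν * (z + δ) ^ 2 / x ^ 2 / ν)
      (ν * (2 * (z + δ)) / x ^ 2 / ν) z := hq.div_const ν
  have hlog : HasDerivAt (fun z : ℝ => Real.log (ν * (z + δ) ^ 2 / x ^ 2 / ν))
      ((ν * (2 * (z + δ)) / x ^ 2 / ν) / (ν * (z + δ) ^ 2 / x ^ 2 / ν)) z :=
    hw.log (ne_of_gt hwpos)
  have hinner : HasDerivAt (fun z : ℝ =>
      ν * (z + δ) ^ 2 / x ^ 2 - ν - (ν - 2) * Real.log ((ν * (z + δ) ^ 2 / x ^ 2) / ν)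
        + Real.log ν + Real.log (2 * Real.pi) + z ^ 2)
      (ν * (2 * (z + δ)) / x ^ 2 - (ν - 2) * ((ν * (2 * (z + δ)) / x ^ 2 / ν) / (ν * (z + δ) ^ 2 / x ^ 2 / ν)) + 2 * z) z := by
    have hz2 : HasDerivAt (fun z : ℝ => z ^ 2) (2 * z) z := by
      simpa using hasDerivAt_pow 2 z
    simpa using ((((hq.sub_const ν).sub (hlog.const_mul (ν - 2))).add_const (Real.log ν)).add_const (Real.log (2*Real.pi))).fun_add hz2
  have hf := (hinner.const_mul (1 / 2 : ℝ)).const_sub (-Real.log 2)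
  have heq : -(ν * (z + δ) / x ^ 2 + z - (ν - 2) / (z + δ)) =
      -(1 / 2 * (ν * (2 * (z + δ)) / x ^ 2 - (ν - 2) * ((ν * (2 * (z + δ)) / x ^ 2 / ν) / (ν * (z + δ) ^ 2 / x ^ 2 / ν)) + 2 * z)) := by
    field_simp
    ring
  rw [heq]
  exact hf


set_option maxHeartbeats 1000000 in
/-- the log-integrand h(z) attains its maximum on (−δ, ∞) at z_mod, and
h′(z_mod) = 0, provided the discriminant is nonnegative. -/
theorem integrand_log_mode (x ν δ : ℝ) (hx : 0 < x) (hν : 2 < ν)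
    (hdisc : 0 ≤ 4 * ν * (ν - 2) + x ^ 2 * (δ ^ 2 + 4 * (ν - 2))) :
    deriv (fun z : ℝ => -Real.log 2 - (1 / 2) *
        (ν * (z + δ) ^ 2 / x ^ 2 - ν - (ν - 2) * Real.log ((ν * (z + δ) ^ 2 / x ^ 2) / ν)
          + Real.log ν + Real.log (2 * Real.pi) + z ^ 2))
      ((-δ * (x ^ 2 + 2 * ν)
        + x * Real.sqrt (4 * ν * (ν - 2) + x ^ 2 * (δ ^ 2 + 4 * (ν - 2))))
        / (2 * (x ^ 2 + ν))) = 0 ∧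
    IsMaxOn (fun z : ℝ => -Real.log 2 - (1 / 2) *
        (ν * (z + δ) ^ 2 / x ^ 2 - ν - (ν - 2) * Real.log ((ν * (z + δ) ^ 2 / x ^ 2) / ν)
          + Real.log ν + Real.log (2 * Real.pi) + z ^ 2))
      (Set.Ioi (-δ))
      ((-δ * (x ^ 2 + 2 * ν)
        + x * Real.sqrt (4 * ν * (ν - 2) + x ^ 2 * (δ ^ 2 + 4 * (ν - 2))))
        / (2 * (x ^ 2 + ν))) := by
  set f : ℝ → ℝ := fun z : ℝ => -Real.log 2 - (1 / 2) *
        (ν * (z + δ) ^ 2 / x ^ 2 - ν - (ν - 2) * Real.log ((ν * (z + δ) ^ 2 / x ^ 2) / ν)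
          + Real.log ν + Real.log (2 * Real.pi) + z ^ 2) with hf
  set s := Real.sqrt (4 * ν * (ν - 2) + x ^ 2 * (δ ^ 2 + 4 * (ν - 2))) with hsdef
  have hs0 : 0 ≤ s := Real.sqrt_nonneg _
  have hs2 : s ^ 2 = 4 * ν * (ν - 2) + x ^ 2 * (δ ^ 2 + 4 * (ν - 2)) := Real.sq_sqrt hdisc
  set m := (-δ * (x ^ 2 + 2 * ν) + x * s) / (2 * (x ^ 2 + ν)) with hm
  have hx2 : (0:ℝ) < x ^ 2 := by positivity
  have ha : (0:ℝ) < 2 * (x ^ 2 + ν) := by nlinarith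
  have hsgt : δ * x < s ∧ -(δ * x) < s := by
    constructor <;> nlinarith [sq_nonneg (s - δ*x), sq_nonneg (s + δ*x), hs2]
  have hmgt : -δ < m := by
    rw [hm, lt_div_iff₀ ha]
    nlinarith [hsgt.2, hx.le]
  have hkey : 2 * (x ^ 2 + ν) * m + δ * (2 * ν + x ^ 2) = x * s := by
    rw [hm]; field_simp; ring
  -- N(m) = 0
  have hNm : (x ^ 2 + ν) * m ^ 2 + δ * (2 * ν + x ^ 2) * m + (ν * δ ^ 2 - x ^ 2 * (ν - 2)) = 0 := by
    have ht : (2 * (x ^ 2 + ν) * m + δ * (2 * ν + x ^ 2)) ^ 2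
        = x ^ 2 * (4 * ν * (ν - 2) + x ^ 2 * (δ ^ 2 + 4 * (ν - 2))) := by
      rw [hkey, ← hs2]; ring
    have h4 : 4 * (x ^ 2 + ν) *
        ((x ^ 2 + ν) * m ^ 2 + δ * (2 * ν + x ^ 2) * m + (ν * δ ^ 2 - x ^ 2 * (ν - 2))) = 0 := by
      linear_combination ht
    have hane : (4 * (x ^ 2 + ν) : ℝ) ≠ 0 := by positivity
    exact (mul_eq_zero.1 h4).resolve_left hane
  -- sign of the quadratic N
  have hNneg : ∀ z : ℝ, -δ < z → z < m →
      (x ^ 2 + ν) * z ^ 2 + δ * (2 * ν + x ^ 2) * z + (ν * δ ^ 2 - x ^ 2 * (ν - 2)) < 0 := by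
    intro z hz1 hz2
    have ht1 : 2 * (x ^ 2 + ν) * z + δ * (2 * ν + x ^ 2) < x * s := by
      rw [← hkey]
      have := mul_lt_mul_of_pos_left hz2 ha
      linarith
    have ht2 : -(δ * x ^ 2) < 2 * (x ^ 2 + ν) * z + δ * (2 * ν + x ^ 2) := by
      have hzd : (0:ℝ) < z + δ := by linarith
      nlinarith [mul_pos ha hzd]
    have hxs : δ * x ^ 2 < x * s := by nlinarith [mul_lt_mul_of_pos_left hsgt.1 hx]
    have hts : 0 < 2 * (x ^ 2 + ν) * z + δ * (2 * ν + x ^ 2) + x * s := by nlinarith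
    have hprod : 0 < (x * s - (2 * (x ^ 2 + ν) * z + δ * (2 * ν + x ^ 2))) *
        (2 * (x ^ 2 + ν) * z + δ * (2 * ν + x ^ 2) + x * s) := by
      apply mul_pos <;> nlinarith
    nlinarith [hprod, hs2, ha]
  have hNpos : ∀ z : ℝ, m < z →
      0 < (x ^ 2 + ν) * z ^ 2 + δ * (2 * ν + x ^ 2) * z + (ν * δ ^ 2 - x ^ 2 * (ν - 2)) := by
    intro z hz
    have ht1 : x * s < 2 * (x ^ 2 + ν) * z + δ * (2 * ν + x ^ 2) := by
      rw [← hkey]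
      have := mul_lt_mul_of_pos_left hz ha
      linarith
    have hxs0 : 0 ≤ x * s := by positivity
    have hprod : 0 < (2 * (x ^ 2 + ν) * z + δ * (2 * ν + x ^ 2) - x * s) *
        (2 * (x ^ 2 + ν) * z + δ * (2 * ν + x ^ 2) + x * s) := by
      apply mul_pos <;> nlinarith
    nlinarith [hprod, hs2, ha]
  -- derivative sign helper
  have hgd : ∀ z : ℝ, -δ < z → deriv f z = -(ν * (z + δ) / x ^ 2 + z - (ν - 2) / (z + δ)) :=
    fun z hz => (hasDerivAt_h x ν δ hx hν z hz).deriv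
  have hgeq : ∀ z : ℝ, -δ < z →
      -(ν * (z + δ) / x ^ 2 + z - (ν - 2) / (z + δ)) =
      -(((x ^ 2 + ν) * z ^ 2 + δ * (2 * ν + x ^ 2) * z + (ν * δ ^ 2 - x ^ 2 * (ν - 2)))
        / (x ^ 2 * (z + δ))) := by
    intro z hz
    have hzd : (0:ℝ) < z + δ := by linarith
    field_simp
    ring
  -- monotone then antitone
  have hmono : StrictMonoOn f (Ioc (-δ) m) := by
    apply strictMonoOn_of_deriv_pos (convex_Ioc _ _)
    · intro z hz
      exact (hasDerivAt_h x ν δ hx hν z hz.1).continuousAt.continuousWithinAt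
    · intro z hz
      rw [interior_Ioc] at hz
      rw [hgd z hz.1, hgeq z hz.1, neg_pos]
      have hzd : (0:ℝ) < z + δ := by linarith [hz.1]
      exact div_neg_of_neg_of_pos (hNneg z hz.1 hz.2) (by positivity)
  have hanti : StrictAntiOn f (Ici m) := by
    apply strictAntiOn_of_deriv_neg (convex_Ici _)
    · intro z hz
      exact (hasDerivAt_h x ν δ hx hν z (lt_of_lt_of_le hmgt hz)).continuousAt.continuousWithinAt
    · intro z hz
      rw [interior_Ici] at hz
      have hzgt : -δ < z := lt_trans hmgt hz
      rw [hgd z hzgt, hgeq z hzgt]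
      have hzd : (0:ℝ) < z + δ := by linarith
      exact neg_lt_zero.mpr (div_pos (hNpos z hz) (by positivity))
  constructor
  · rw [hgd m hmgt, hgeq m hmgt, hNm, zero_div, neg_zero]
  · intro z hz
    simp only [Set.mem_setOf_eq]
    rcases lt_trichotomy z m with h | h | h
    · exact (hmono ⟨hz, h.le⟩ ⟨hmgt, le_refl m⟩ h).le
    · exact le_of_eq (by rw [h])
    · exact (hanti (mem_Ici.2 le_rfl) (mem_Ici.2 h.le) h).le
end

section
/- The integrand g(z) = Γ_u(ν/2, ν(z+δ)²/(2x²)) · φ(z) is integrable on (−δ, ∞), and ∫_{−δ}^∞ g(z) dz = F_{t_{ν,δ}}(x) − Φ(−δ) for x > 0. -/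
open MeasureTheory ProbabilityTheory Real Set

/-!
Condition on `Z = z`. If `z ≤ -δ` the event `T ≤ x` is certain, which accounts for `Φ(-δ)`.
If `z > -δ` it is the event `Q ≥ ν (z + δ)² / x²`, and since `Q / 2` has law `Gamma(ν/2, 1)`
its probability is `Γ_u(ν/2, ν (z + δ)² / (2 x²))`. Integrating against the density of `Z`
gives the identity; integrability holds because `0 ≤ Γ_u ≤ 1`.
-/

open scoped NNReal

section UpperRegGamma

variable {a : ℝ}

lemma upperRegGamma_nonneg (ha : 0 < a) {y : ℝ} (hy : 0 ≤ y) : 0 ≤ upperRegGamma a y :=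
  div_nonneg (setIntegral_nonneg measurableSet_Ioi fun t ht => by
    have : 0 ≤ t := hy.trans (le_of_lt ht)
    positivity) (Gamma_pos_of_pos ha).le

lemma upperRegGamma_zero (ha : 0 < a) : upperRegGamma a 0 = 1 := by
  rw [upperRegGamma, ← Gamma_eq_integral ha, div_self (Gamma_pos_of_pos ha).ne']

lemma upperRegGamma_le_of_le (ha : 0 < a) {u v : ℝ} (hu : 0 ≤ u) (huv : u ≤ v) :
    upperRegGamma a v ≤ upperRegGamma a u := by
  refine div_le_div_of_nonneg_right ?_ (Gamma_pos_of_pos ha).le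
  refine setIntegral_mono_set ((GammaIntegral_convergent ha).mono_set (Ioi_subset_Ioi hu)) ?_
    (Ioi_subset_Ioi huv).eventuallyLE
  filter_upwards [ae_restrict_mem measurableSet_Ioi] with t ht
  have : 0 ≤ t := hu.trans (le_of_lt ht)
  positivity

lemma upperRegGamma_le_one (ha : 0 < a) {y : ℝ} (hy : 0 ≤ y) : upperRegGamma a y ≤ 1 :=
  upperRegGamma_zero ha ▸ upperRegGamma_le_of_le ha le_rfl hy

lemma measurable_upperRegGamma_comp (ha : 0 < a) {f : ℝ → ℝ} (hf : Measurable f)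
    (hf0 : ∀ z, 0 ≤ f z) :
    Measurable fun z => upperRegGamma a (f z) := by
  -- `upperRegGamma a` is only antitone on `[0, ∞)`, so we clamp its argument there.
  have hanti : Antitone fun y => upperRegGamma a (max y 0) := fun u v huv =>
    upperRegGamma_le_of_le ha (le_max_right _ _) (max_le_max huv le_rfl)
  simpa only [Function.comp_def, max_eq_left (hf0 _)] using hanti.measurable.comp hf

end UpperRegGamma

section GammaMeasure

variable {a r : ℝ}

lemma integrable_gammaPDFReal (ha : 0 < a) (hr : 0 < r) : Integrable (gammaPDFReal a r) :=
  ⟨(measurable_gammaPDFReal a r).aestronglyMeasurable,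
    (hasFiniteIntegral_iff_ofReal (ae_of_all _ (gammaPDFReal_nonneg ha hr))).2
      ((lintegral_gammaPDF_eq_one ha hr).trans_lt ENNReal.one_lt_top)⟩

lemma gammaPDFReal_of_nonneg {t : ℝ} (hr : 0 < r) (ht : 0 ≤ t) :
    gammaPDFReal a r t = r / Gamma a * (exp (-(r * t)) * (r * t) ^ (a - 1)) := by
  rw [gammaPDFReal, if_pos ht, mul_rpow hr.le ht, rpow_sub_one hr.ne']
  field_simp

lemma gammaMeasure_Ici (ha : 0 < a) (hr : 0 < r) {c : ℝ} (hc : 0 ≤ c) :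
    gammaMeasure a r (Ici c) = ENNReal.ofReal (upperRegGamma a (r * c)) := by
  rw [gammaMeasure, withDensity_apply _ measurableSet_Ici,
    Measure.restrict_congr_set Ioi_ae_eq_Ici.symm]
  unfold gammaPDF
  rw [← ofReal_integral_eq_lintegral_ofReal (integrable_gammaPDFReal ha hr).integrableOn
      (ae_of_all _ (gammaPDFReal_nonneg ha hr))]
  congr 1
  rw [setIntegral_congr_fun measurableSet_Ioi fun t ht =>
      gammaPDFReal_of_nonneg hr (hc.trans (le_of_lt ht)),
    integral_const_mul, integral_comp_mul_left_Ioi (fun s => exp (-s) * s ^ (a - 1)) c hr,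
    upperRegGamma, smul_eq_mul]
  field_simp

lemma gammaMeasure_Iic_zero : gammaMeasure a r (Iic 0) = 0 := by
  rw [gammaMeasure, withDensity_apply _ measurableSet_Iic,
    Measure.restrict_congr_set Iio_ae_eq_Iic.symm]
  exact lintegral_gammaPDF_of_nonpos le_rfl

end GammaMeasure

section Slice

variable {x ν : ℝ}

lemma div_sqrt_div_le_iff {y q : ℝ} (hx : 0 < x) (hy : 0 ≤ y) (hν : 0 < ν) (hq : 0 < q) :
    y / √(q / ν) ≤ x ↔ ν * y ^ 2 / x ^ 2 ≤ q := by
  rw [div_le_iff₀ (sqrt_pos.2 (div_pos hq hν)), ← div_le_iff₀' hx,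
    le_sqrt (div_nonneg hy hx.le) (div_nonneg hq.le hν.le), div_pow,
    div_le_div_iff₀ (by positivity) hν, div_le_iff₀ (by positivity), mul_comm ν]

lemma setOf_div_sqrt_div_le_of_pos {y : ℝ} (hx : 0 < x) (hy : 0 < y) (hν : 0 < ν) :
    {q | y / √(q / ν) ≤ x} = Iic 0 ∪ Ici (ν * y ^ 2 / x ^ 2) := by
  ext q
  rcases le_or_gt q 0 with hq | hq
  · have : √(q / ν) = 0 := sqrt_eq_zero'.2 (div_nonpos_of_nonpos_of_nonneg hq hν.le)
    simp [this, hq, hx.le]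
  · simp [div_sqrt_div_le_iff hx hy.le hν hq, hq.not_ge]

lemma setOf_div_sqrt_div_le_of_nonpos {y : ℝ} (hx : 0 < x) (hy : y ≤ 0) :
    {q | y / √(q / ν) ≤ x} = univ :=
  eq_univ_of_forall fun _ => (div_nonpos_of_nonpos_of_nonneg hy (sqrt_nonneg _)).trans hx.le

lemma gammaMeasure_setOf_div_sqrt_div_le {a r : ℝ} (ha : 0 < a) (hr : 0 < r) (hx : 0 < x)
    (hν : 0 < ν) (y : ℝ) :
    gammaMeasure a r {q | y / √(q / ν) ≤ x}
      = if y ≤ 0 then 1 else ENNReal.ofReal (upperRegGamma a (r * (ν * y ^ 2 / x ^ 2))) := by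
  split_ifs with hy
  · have := isProbabilityMeasure_gammaMeasure ha hr
    rw [setOf_div_sqrt_div_le_of_nonpos hx hy, measure_univ]
  · rw [setOf_div_sqrt_div_le_of_pos hx (not_le.1 hy) hν,
      measure_congr (union_ae_eq_right_of_ae_eq_empty (ae_eq_empty.2 gammaMeasure_Iic_zero)),
      gammaMeasure_Ici ha hr (by positivity)]

end Slice

section StdNormal

lemma stdNormalPDF_eq_gaussianPDFReal : stdNormalPDF = gaussianPDFReal 0 1 := by
  ext z
  simp [stdNormalPDF, gaussianPDFReal]

lemma stdNormalPDF_nonneg (z : ℝ) : 0 ≤ stdNormalPDF z :=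
  stdNormalPDF_eq_gaussianPDFReal ▸ gaussianPDFReal_nonneg 0 1 z

lemma stdNormalCDF_nonneg (c : ℝ) : 0 ≤ stdNormalCDF c :=
  setIntegral_nonneg measurableSet_Iic fun z _ => stdNormalPDF_nonneg z

lemma integrable_stdNormalPDF : Integrable stdNormalPDF :=
  stdNormalPDF_eq_gaussianPDFReal ▸ integrable_gaussianPDFReal 0 1

lemma gaussianReal_Iic (c : ℝ) : gaussianReal 0 1 (Iic c) = ENNReal.ofReal (stdNormalCDF c) := by
  rw [gaussianReal_apply_eq_integral 0 one_ne_zero, ← stdNormalPDF_eq_gaussianPDFReal,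
    stdNormalCDF]

lemma setLIntegral_gaussianReal_ofReal {μ : ℝ} {v : ℝ≥0} (hv : v ≠ 0) {f : ℝ → ℝ} {s : Set ℝ}
    (hf : IntegrableOn (fun z => f z * gaussianPDFReal μ v z) s) (hf0 : ∀ z, 0 ≤ f z) :
    ∫⁻ z in s, ENNReal.ofReal (f z) ∂gaussianReal μ v
      = ENNReal.ofReal (∫ z in s, f z * gaussianPDFReal μ v z) := by
  rw [gaussianReal_of_var_ne_zero _ hv, restrict_withDensity' s,
    lintegral_withDensity_eq_lintegral_mul_non_measurable _ (measurable_gaussianPDF μ v)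
      (ae_of_all _ fun _ => gaussianPDF_lt_top),
    ofReal_integral_eq_lintegral_ofReal hf
      (ae_of_all _ fun z => mul_nonneg (hf0 z) (gaussianPDFReal_nonneg μ v z))]
  refine lintegral_congr fun z => ?_
  rw [Pi.mul_apply, gaussianPDF, ← ENNReal.ofReal_mul (gaussianPDFReal_nonneg μ v z), mul_comm]

lemma integrable_upperRegGamma_mul_stdNormalPDF {a : ℝ} (ha : 0 < a) {f : ℝ → ℝ}
    (hf : Measurable f) (hf0 : ∀ z, 0 ≤ f z) :
    Integrable fun z => upperRegGamma a (f z) * stdNormalPDF z :=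
  integrable_stdNormalPDF.bdd_mul (measurable_upperRegGamma_comp ha hf hf0).aestronglyMeasurable
    (ae_of_all _ fun z => by
      rw [norm_of_nonneg (upperRegGamma_nonneg ha (hf0 z))]
      exact upperRegGamma_le_one ha (hf0 z))

end StdNormal

theorem ProbabilityTheory.IndepFun.measure_preimage_eq_lintegral {Ω α β : Type*}
    [MeasurableSpace Ω] [MeasurableSpace α] [MeasurableSpace β] {P : Measure Ω}
    {X : Ω → α} {Y : Ω → β} {μ : Measure α} {ν : Measure β} [SigmaFinite μ] [SigmaFinite ν]
    (hX : Measurable X) (hY : Measurable Y) (hXlaw : P.map X = μ) (hYlaw : P.map Y = ν)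
    (hXY : IndepFun X Y P) {S : Set (α × β)} (hS : MeasurableSet S) :
    P ((fun ω => (X ω, Y ω)) ⁻¹' S) = ∫⁻ a, ν (Prod.mk a ⁻¹' S) ∂μ := by
  rw [← Measure.map_apply (hX.prodMk hY) hS, (indepFun_iff_map_prod_eq_prod_map_map'
    hX.aemeasurable hY.aemeasurable (hXlaw ▸ inferInstance) (hYlaw ▸ inferInstance)).1 hXY,
    hXlaw, hYlaw, Measure.prod_apply hS]

theorem integrand_integrable_and_integral_general
    {Ω : Type*} [MeasurableSpace Ω] (P : Measure Ω)
    (Z Q : Ω → ℝ) (hZ : Measurable Z) (hQ : Measurable Q)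
    (ν δ : ℝ) (hν : 0 < ν)
    (hZlaw : Measure.map Z P = ProbabilityTheory.gaussianReal 0 1)
    (hQlaw : Measure.map Q P = ProbabilityTheory.gammaMeasure (ν / 2) (1 / 2))
    (hindep : ProbabilityTheory.IndepFun Z Q P)
    (x : ℝ) (hx : 0 < x) :
    MeasureTheory.IntegrableOn
      (fun z => upperRegGamma (ν / 2) (ν * (z + δ) ^ 2 / (2 * x ^ 2)) * stdNormalPDF z)
      (Set.Ioi (-δ)) ∧
    ∫ z in Set.Ioi (-δ),
        upperRegGamma (ν / 2) (ν * (z + δ) ^ 2 / (2 * x ^ 2)) * stdNormalPDF z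
      = (P {ω | (Z ω + δ) / Real.sqrt (Q ω / ν) ≤ x}).toReal - stdNormalCDF (-δ) := by
  have ha : 0 < ν / 2 := half_pos hν
  have := isProbabilityMeasure_gammaMeasure ha one_half_pos
  have hint := (integrable_upperRegGamma_mul_stdNormalPDF ha
    (f := fun z => ν * (z + δ) ^ 2 / (2 * x ^ 2)) (by fun_prop) fun z => by positivity
    ).integrableOn (s := Ioi (-δ))
  refine ⟨hint, ?_⟩
  have hS : MeasurableSet {p : ℝ × ℝ | (p.1 + δ) / √(p.2 / ν) ≤ x} :=
    measurableSet_le (by fun_prop) measurable_const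
  have hP : P {ω | (Z ω + δ) / √(Q ω / ν) ≤ x} = ENNReal.ofReal (stdNormalCDF (-δ))
      + ENNReal.ofReal (∫ z in Ioi (-δ),
          upperRegGamma (ν / 2) (ν * (z + δ) ^ 2 / (2 * x ^ 2)) * stdNormalPDF z) := by
    change P ((fun ω => (Z ω, Q ω)) ⁻¹' {p : ℝ × ℝ | (p.1 + δ) / √(p.2 / ν) ≤ x}) = _
    rw [hindep.measure_preimage_eq_lintegral hZ hQ hZlaw hQlaw hS,
      ← lintegral_add_compl _ measurableSet_Iic, compl_Iic, stdNormalPDF_eq_gaussianPDFReal,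
      ← setLIntegral_gaussianReal_ofReal one_ne_zero
        (stdNormalPDF_eq_gaussianPDFReal ▸ hint) fun z => upperRegGamma_nonneg ha (by positivity),
      ← gaussianReal_Iic, ← setLIntegral_one]
    simp only [preimage_ofPred_eq, gammaMeasure_setOf_div_sqrt_div_le ha one_half_pos hx hν]
    congr 1
    · exact setLIntegral_congr_fun measurableSet_Iic fun z (hz : z ≤ -δ) => if_pos (by linarith)
    · refine setLIntegral_congr_fun measurableSet_Ioi fun z (hz : -δ < z) => ?_
      rw [if_neg (by linarith)]
      congr 2
      ring
  rw [hP, ENNReal.toReal_add ENNReal.ofReal_ne_top ENNReal.ofReal_ne_top,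
    ENNReal.toReal_ofReal (stdNormalCDF_nonneg (-δ)),
    ENNReal.toReal_ofReal (setIntegral_nonneg measurableSet_Ioi fun z _ => mul_nonneg
      (upperRegGamma_nonneg ha (by positivity)) (stdNormalPDF_nonneg z))]
  ring

/-- g(z) = Γ_u(ν/2, ν(z+δ)²/(2x²))·φ(z) is integrable on (−δ, ∞) and its
integral equals F_{t_{ν,δ}}(x) − Φ(−δ) for x > 0. -/
theorem integrand_integrable_and_integral
    {Ω : Type*} [MeasurableSpace Ω] (P : Measure Ω) [IsProbabilityMeasure P]
    (Z Q : Ω → ℝ) (hZ : Measurable Z) (hQ : Measurable Q)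
    (ν δ : ℝ) (hν : 0 < ν)
    (hZlaw : Measure.map Z P = ProbabilityTheory.gaussianReal 0 1)
    (hQlaw : Measure.map Q P = ProbabilityTheory.gammaMeasure (ν / 2) (1 / 2))
    (hindep : ProbabilityTheory.IndepFun Z Q P)
    (x : ℝ) (hx : 0 < x) :
    MeasureTheory.IntegrableOn
      (fun z => upperRegGamma (ν / 2) (ν * (z + δ) ^ 2 / (2 * x ^ 2)) * stdNormalPDF z)
      (Set.Ioi (-δ)) ∧
    ∫ z in Set.Ioi (-δ),
        upperRegGamma (ν / 2) (ν * (z + δ) ^ 2 / (2 * x ^ 2)) * stdNormalPDF z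
      = (P {ω | (Z ω + δ) / Real.sqrt (Q ω / ν) ≤ x}).toReal - stdNormalCDF (-δ) :=
  integrand_integrable_and_integral_general P Z Q hZ hQ ν δ hν hZlaw hQlaw hindep x hx
end

section
/- For x > 0 and δ ≥ 0, if F_{t_{ν,δ}}(x) denotes the noncentral t CDF, then P(T > x) = ∫_{−δ}^∞ Γ_l(ν/2, ν(z+δ)²/(2x²)) φ(z) dz, i.e., the upper-tail probability equals the integral of the lower regularized incomplete gamma function against the normal density over (−δ, ∞). -/
open MeasureTheory ProbabilityTheory Real Set

/-! Given `Z = z`, the event `T > x` is `z + δ > 0 ∧ 0 < Q < ν (z + δ)² / x²`. Since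
`Q ~ χ²_ν = Γ(ν/2, 1/2)`, the substitution `t = q/2` turns its probability into
`Γ_l(ν/2, ν (z + δ)² / (2x²))`, and independence (Fubini on the product law of `(Z, Q)`)
integrates this against the standard normal density. -/

lemma lowerRegGamma_eq_integral_Ioc_div {a y : ℝ} (ha : 0 < a) (hy : 0 ≤ y) :
    lowerRegGamma a y = (∫ t in Ioc 0 y, exp (-t) * t ^ (a - 1)) / Gamma a := by
  have hint : IntegrableOn (fun t ↦ exp (-t) * t ^ (a - 1)) (Ioi 0) := GammaIntegral_convergent ha
  have hsplit : Gamma a = (∫ t in Ioc 0 y, exp (-t) * t ^ (a - 1))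
      + ∫ t in Ioi y, exp (-t) * t ^ (a - 1) := by
    rw [Gamma_eq_integral ha, ← Ioc_union_Ioi_eq_Ioi hy,
      setIntegral_union (Ioc_disjoint_Ioi le_rfl) measurableSet_Ioi
        (hint.mono_set Ioc_subset_Ioi_self) (hint.mono_set (Ioi_subset_Ioi hy))]
  rw [lowerRegGamma, upperRegGamma, eq_div_iff (Gamma_pos_of_pos ha).ne', sub_mul, div_mul_cancel₀ _ (Gamma_pos_of_pos ha).ne']
  linarith

lemma gammaPDFReal_eq_mul_exp_neg_mul_rpow {a r q : ℝ} (hr : 0 < r) (hq : 0 ≤ q) :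
    gammaPDFReal a r q = r / Gamma a * (exp (-(r * q)) * (r * q) ^ (a - 1)) := by
  rw [gammaPDFReal, if_pos hq, mul_rpow hr.le hq, rpow_sub_one hr.ne']
  field_simp

lemma gammaMeasure_real_Ioo_zero {a r c : ℝ} (ha : 0 < a) (hr : 0 < r) (hc : 0 ≤ c) :
    (gammaMeasure a r).real (Ioo 0 c) = lowerRegGamma a (r * c) := by
  have hdensity : (gammaMeasure a r).real (Ioo 0 c) = ∫ q in 0..c, gammaPDFReal a r q := by
    rw [measureReal_def, gammaMeasure, withDensity_apply _ measurableSet_Ioo,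
      intervalIntegral.integral_of_le hc, integral_Ioc_eq_integral_Ioo,
      integral_eq_lintegral_of_nonneg_ae (ae_of_all _ (gammaPDFReal_nonneg ha hr))
        (measurable_gammaPDFReal a r).aestronglyMeasurable]
    rfl
  rw [hdensity, intervalIntegral.integral_congr (g := fun q ↦ r / Gamma a *
      (exp (-(r * q)) * (r * q) ^ (a - 1))) fun q hq ↦
        gammaPDFReal_eq_mul_exp_neg_mul_rpow hr (uIcc_of_le hc ▸ hq).1,
    intervalIntegral.integral_const_mul,
    intervalIntegral.integral_comp_mul_left (fun t ↦ exp (-t) * t ^ (a - 1)) hr.ne',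
    lowerRegGamma_eq_integral_Ioc_div ha (mul_nonneg hr.le hc),
    mul_zero, intervalIntegral.integral_of_le (mul_nonneg hr.le hc), smul_eq_mul]
  field_simp

lemma lt_div_sqrt_div_iff {x ν w q : ℝ} (hx : 0 < x) (hν : 0 < ν) :
    x < w / √(q / ν) ↔ 0 < w ∧ q ∈ Ioo 0 (ν * w ^ 2 / x ^ 2) := by
  rcases le_or_gt q 0 with hq | hq
  · simp [sqrt_eq_zero'.mpr (div_nonpos_of_nonpos_of_nonneg hq hν.le), hx.le, hq.not_gt]
  have hs : 0 < √(q / ν) := sqrt_pos.mpr (div_pos hq hν)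
  have hxs : x * √(q / ν) = √(x ^ 2 * (q / ν)) := by rw [sqrt_mul (sq_nonneg x), sqrt_sq hx.le]
  have hsq : x ^ 2 * (q / ν) < w ^ 2 ↔ q < ν * w ^ 2 / x ^ 2 := by
    rw [lt_div_iff₀ (by positivity), ← mul_div_assoc, div_lt_iff₀ hν]
    constructor <;> intro h <;> linarith
  rw [lt_div_iff₀ hs, hxs]
  constructor
  · intro h
    have hw : 0 < w := (sqrt_nonneg _).trans_lt h
    exact ⟨hw, hq, hsq.mp ((sqrt_lt' hw).mp h)⟩
  · rintro ⟨hw, -, hqc⟩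
    exact (sqrt_lt' hw).mpr (hsq.mpr hqc)

lemma gammaMeasure_real_setOf_lt_div_sqrt {x ν w : ℝ} (hx : 0 < x) (hν : 0 < ν) :
    (gammaMeasure (ν / 2) (1 / 2)).real {q | x < w / √(q / ν)}
      = if 0 < w then lowerRegGamma (ν / 2) (ν * w ^ 2 / (2 * x ^ 2)) else 0 := by
  simp_rw [lt_div_sqrt_div_iff hx hν]
  split_ifs with hw
  · simp only [hw, true_and, ofPred_mem_eq]
    rw [gammaMeasure_real_Ioo_zero (by positivity) (by norm_num) (by positivity)]
    ring_nf
  · simp [hw]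

lemma ProbabilityTheory.IndepFun.measureReal_preimage_eq_integral {Ω α β : Type*}
    [MeasurableSpace Ω] [MeasurableSpace α] [MeasurableSpace β] {P : Measure Ω} [IsFiniteMeasure P]
    {X : Ω → α} {Y : Ω → β} (hXY : IndepFun X Y P) (hX : Measurable X) (hY : Measurable Y)
    {S : Set (α × β)} (hS : MeasurableSet S) :
    P.real ((fun ω ↦ (X ω, Y ω)) ⁻¹' S) = ∫ z, (P.map Y).real (Prod.mk z ⁻¹' S) ∂(P.map X) := by
  rw [measureReal_def, ← Measure.map_apply (hX.prodMk hY) hS,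
    (indepFun_iff_map_prod_eq_prod_map_map hX.aemeasurable hY.aemeasurable).mp hXY,
    Measure.prod_apply hS, ← integral_toReal (measurable_measure_prodMk_left hS).aemeasurable
      (ae_of_all _ fun _ ↦ measure_lt_top _ _)]
  rfl

lemma integral_gaussianReal_zero_one (f : ℝ → ℝ) :
    ∫ z, f z ∂gaussianReal 0 1 = ∫ z, stdNormalPDF z * f z := by
  rw [integral_gaussianReal_eq_integral_smul one_ne_zero]
  simp [gaussianPDFReal_def, stdNormalPDF]

theorem noncentralT_upper_tail_general
    {Ω : Type*} [MeasurableSpace Ω] (P : Measure Ω) [IsProbabilityMeasure P]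
    (Z Q : Ω → ℝ) (hZ : Measurable Z) (hQ : Measurable Q)
    (ν δ : ℝ) (hν : 0 < ν)
    (hZlaw : Measure.map Z P = ProbabilityTheory.gaussianReal 0 1)
    (hQlaw : Measure.map Q P = ProbabilityTheory.gammaMeasure (ν / 2) (1 / 2))
    (hindep : ProbabilityTheory.IndepFun Z Q P)
    (x : ℝ) (hx : 0 < x) :
    (P {ω | x < (Z ω + δ) / Real.sqrt (Q ω / ν)}).toReal
      = ∫ z in Set.Ioi (-δ),
          lowerRegGamma (ν / 2) (ν * (z + δ) ^ 2 / (2 * x ^ 2)) * stdNormalPDF z := by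
  set S : Set (ℝ × ℝ) := {p | x < (p.1 + δ) / √(p.2 / ν)}
  have hS : MeasurableSet S := measurableSet_lt measurable_const (by fun_prop)
  calc (P {ω | x < (Z ω + δ) / √(Q ω / ν)}).toReal
      = P.real ((fun ω ↦ (Z ω, Q ω)) ⁻¹' S) := rfl
    _ = ∫ z, (P.map Q).real (Prod.mk z ⁻¹' S) ∂(P.map Z) :=
      hindep.measureReal_preimage_eq_integral hZ hQ hS
    _ = ∫ z, (Ioi (-δ)).indicator
          (fun z ↦ lowerRegGamma (ν / 2) (ν * (z + δ) ^ 2 / (2 * x ^ 2)) * stdNormalPDF z) z := by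
      rw [hZlaw, hQlaw, integral_gaussianReal_zero_one]
      congr with z
      rw [show Prod.mk z ⁻¹' S = {q | x < (z + δ) / √(q / ν)} from rfl,
        gammaMeasure_real_setOf_lt_div_sqrt hx hν]
      simp only [indicator_apply, mem_Ioi, neg_lt_iff_pos_add]
      split_ifs <;> ring
    _ = _ := integral_indicator measurableSet_Ioi

/-- for x > 0 and δ ≥ 0,
P(T > x) = ∫_{−δ}^∞ Γ_l(ν/2, ν(z+δ)²/(2x²)) φ(z) dz. -/
theorem noncentralT_upper_tail
    {Ω : Type*} [MeasurableSpace Ω] (P : Measure Ω) [IsProbabilityMeasure P]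
    (Z Q : Ω → ℝ) (hZ : Measurable Z) (hQ : Measurable Q)
    (ν δ : ℝ) (hν : 0 < ν)
    (hZlaw : Measure.map Z P = ProbabilityTheory.gaussianReal 0 1)
    (hQlaw : Measure.map Q P = ProbabilityTheory.gammaMeasure (ν / 2) (1 / 2))
    (hindep : ProbabilityTheory.IndepFun Z Q P)
    (x : ℝ) (hx : 0 < x) (hδ : 0 ≤ δ) :
    (P {ω | x < (Z ω + δ) / Real.sqrt (Q ω / ν)}).toReal
      = ∫ z in Set.Ioi (-δ),
          lowerRegGamma (ν / 2) (ν * (z + δ) ^ 2 / (2 * x ^ 2)) * stdNormalPDF z :=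
  noncentralT_upper_tail_general P Z Q hZ hQ ν δ hν hZlaw hQlaw hindep x hx
end
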